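/- arXiv:2308.10439 — 2 statements merged into one kernel-verified Lean document; each statement's English description precedes it below -/
import Mathlib

section
/- Let A ∈ ℝ^{m×n} with m ≥ n, let x ∈ ℝⁿ satisfy Ax = b, and let ε > 0. Let E ∈ ℝ^{m×n} with ‖E‖₂ < ε/2 and e ∈ ℝ^m. Let σ̂_k ≥ ε ≥ σ̂_{k+1}, where σ̂_j are the singular values of A+E in descending order, and let x̂_k = (A+E)_k^† (b+e), where (A+E)_k^† is the pseudo-inverse of the k-truncated SVD of A+E. Then ‖x̂_k‖₂ ≤ (1/σ̂_k)(2ε‖x‖₂ + ‖e‖₂) + ‖x‖₂. -/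
open Finset
open scoped RealInnerProductSpace

/-!
Write `b + e = (A + E) x + (e - E x)`. The truncated pseudo-inverse sends `(A + E) x` to the
orthogonal projection of `x` onto the top `k` right singular vectors, of norm at most `‖x‖`, and
has operator norm at most `1 / σ̂_k`, while `‖e - E x‖ ≤ ‖e‖ + (ε / 2) ‖x‖`.
-/

section TruncatedSVD

variable {ι E F : Type*} [Fintype ι]
  [NormedAddCommGroup E] [InnerProductSpace ℝ E] [NormedAddCommGroup F] [InnerProductSpace ℝ F]

/-- Parseval for the left side, Bessel for the right. -/
theorem Orthonormal.norm_sum_smul_le {v : ι → E} (hv : Orthonormal ℝ v) {w : ι → F}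
    (hw : Orthonormal ℝ w) {c : ι → ℝ} {C : ℝ} (hC : 0 ≤ C) (x : F)
    (hc : ∀ i, |c i| ≤ C * |⟪w i, x⟫|) :
    ‖∑ i, c i • v i‖ ≤ C * ‖x‖ := by
  refine (sq_le_sq₀ (norm_nonneg _) (by positivity)).mp ?_
  calc ‖∑ i, c i • v i‖ ^ 2 = ∑ i, c i * c i := by
        rw [← real_inner_self_eq_norm_sq, hv.inner_sum]; rfl
    _ ≤ ∑ i, C ^ 2 * ‖⟪w i, x⟫‖ ^ 2 := sum_le_sum fun i _ => by
        rw [← sq, ← sq_abs, Real.norm_eq_abs, ← mul_pow]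
        exact pow_le_pow_left₀ (abs_nonneg _) (hc i) 2
    _ = C ^ 2 * ∑ i, ‖⟪w i, x⟫‖ ^ 2 := (mul_sum ..).symm
    _ ≤ C ^ 2 * ‖x‖ ^ 2 := mul_le_mul_of_nonneg_left (hw.sum_inner_products_le x) (sq_nonneg C)
    _ = (C * ‖x‖) ^ 2 := (mul_pow ..).symm

variable (p : ι → Prop) [DecidablePred p] (s : ι → ℝ) (u : ι → F) (v : ι → E)

/-- Pseudo-inverse of the SVD `y ↦ ∑ i, (s i * ⟪v i, y⟫) • u i` truncated to the indices
satisfying `p` (for the `k`-truncation, `p i ↔ i < k`). -/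
noncomputable def truncatedSVDPinv (z : F) : E :=
  ∑ i, (if p i then (s i)⁻¹ * ⟪u i, z⟫ else 0) • v i

variable {p s u v}

theorem truncatedSVDPinv_apply_svd {T : E → F} (hu : Orthonormal ℝ u)
    (hT : ∀ y, T y = ∑ i, (s i * ⟪v i, y⟫) • u i) (hs : ∀ i, p i → s i ≠ 0) (y : E) :
    truncatedSVDPinv p s u v (T y) = ∑ i, (if p i then ⟪v i, y⟫ else 0) • v i := by
  refine sum_congr rfl fun i _ => ?_
  split_ifs with hi
  · rw [hT, hu.inner_right_fintype (fun j => s j * ⟪v j, y⟫) i, inv_mul_cancel_left₀ (hs i hi)]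
  · rfl

theorem norm_truncatedSVDPinv_apply_svd_le {T : E → F} (hu : Orthonormal ℝ u)
    (hv : Orthonormal ℝ v) (hT : ∀ y, T y = ∑ i, (s i * ⟪v i, y⟫) • u i)
    (hs : ∀ i, p i → s i ≠ 0) (y : E) :
    ‖truncatedSVDPinv p s u v (T y)‖ ≤ ‖y‖ := by
  rw [truncatedSVDPinv_apply_svd hu hT hs]
  simpa using hv.norm_sum_smul_le (c := fun i => if p i then ⟪v i, y⟫ else 0) hv zero_le_one y
    fun i => by split_ifs <;> simp

theorem norm_truncatedSVDPinv_le {σ : ℝ} (hσ : 0 < σ) (hu : Orthonormal ℝ u)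
    (hv : Orthonormal ℝ v) (hs : ∀ i, p i → σ ≤ s i) (z : F) :
    ‖truncatedSVDPinv p s u v z‖ ≤ σ⁻¹ * ‖z‖ := by
  refine hv.norm_sum_smul_le hu (inv_nonneg.mpr hσ.le) z fun i => ?_
  split_ifs with hi
  · rw [abs_mul, abs_inv, abs_of_pos (hσ.trans_le (hs i hi))]
    exact mul_le_mul_of_nonneg_right (inv_anti₀ hσ (hs i hi)) (abs_nonneg _)
  · simp only [abs_zero]; positivity

end TruncatedSVD

/-- bound on the norm of the solution obtained from the truncated SVD of
a perturbed linear system.  The SVD of `A + E` is given by orthonormal families `u`, `v`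
and singular values `s` in descending order; the pseudo-inverse of the `k`-truncated SVD
keeps only the `k` largest singular values. -/
theorem tsvd_solution_norm_bound
    (m n k : ℕ) (hk1 : 1 ≤ k) (hkn : k ≤ n) (ε : ℝ) (hε : 0 < ε)
    (A E : EuclideanSpace ℝ (Fin n) →L[ℝ] EuclideanSpace ℝ (Fin m))
    (u : Fin n → EuclideanSpace ℝ (Fin m)) (v : Fin n → EuclideanSpace ℝ (Fin n))
    (hu : Orthonormal ℝ u) (hv : Orthonormal ℝ v)
    (s : Fin n → ℝ) (hs : Antitone s)
    (hsvd : ∀ y, (A + E) y = ∑ i : Fin n, (s i * ⟪v i, y⟫) • u i)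
    (hE : ‖E‖ < ε / 2)
    (hε1 : ∀ i : Fin n, (i : ℕ) < k → ε ≤ s i)
    (x : EuclideanSpace ℝ (Fin n)) (b e : EuclideanSpace ℝ (Fin m))
    (hAx : A x = b)
    (pinv : EuclideanSpace ℝ (Fin m) →L[ℝ] EuclideanSpace ℝ (Fin n))
    (hpinv : ∀ z, pinv z =
      ∑ i : Fin n, (if (i : ℕ) < k then (s i)⁻¹ * ⟪u i, z⟫ else 0) • v i)
    (xhat : EuclideanSpace ℝ (Fin n)) (hxhat : xhat = pinv (b + e)) :
    ‖xhat‖ ≤ (1 / s ⟨k - 1, by omega⟩) * (2 * ε * ‖x‖ + ‖e‖) + ‖x‖ := by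
  set σ := s ⟨k - 1, by omega⟩
  have hσ : 0 < σ := hε.trans_le (hε1 _ (by simp; omega))
  have hsσ : ∀ i : Fin n, (i : ℕ) < k → σ ≤ s i := fun i hi =>
    hs (Fin.le_iff_val_le_val.mpr (by simp; omega))
  have hs0 : ∀ i : Fin n, (i : ℕ) < k → s i ≠ 0 := fun i hi => (hσ.trans_le (hsσ i hi)).ne'
  have hsplit : b + e = (A + E) x + (e - E x) := by
    rw [← hAx, add_apply]; abel
  have hres : ‖e - E x‖ ≤ 2 * ε * ‖x‖ + ‖e‖ := calc
    ‖e - E x‖ ≤ ‖e‖ + ‖E‖ * ‖x‖ := (norm_sub_le _ _).trans (add_le_add_right (E.le_opNorm x) _)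
    _ ≤ 2 * ε * ‖x‖ + ‖e‖ := by nlinarith [norm_nonneg x]
  calc ‖xhat‖ ≤ ‖pinv ((A + E) x)‖ + ‖pinv (e - E x)‖ := by
        rw [hxhat, hsplit, map_add]; exact norm_add_le _ _
    _ ≤ ‖x‖ + σ⁻¹ * ‖e - E x‖ := by
        rw [hpinv, hpinv]
        exact add_le_add (norm_truncatedSVDPinv_apply_svd_le hu hv hsvd hs0 x)
          (norm_truncatedSVDPinv_le hσ hu hv hsσ _)
    _ ≤ (1 / σ) * (2 * ε * ‖x‖ + ‖e‖) + ‖x‖ := by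
        rw [one_div, add_comm]; gcongr
end

section
/- Let f : [0,1] → ℝ be continuous, let x₁,…,x_N ∈ [0,1], and suppose there exist continuous functions g₀,…,g_{n−1} on [0,1], a function f̃ = Σ_{i=0}^{n−1} d_i g_i with ‖f − f̃‖_{L^∞[0,1]} ≤ δ, and a matrix A ∈ ℝ^{N×n} with A_{ji} = g_i(x_j) whose pseudo-inverse satisfies ‖A^†‖₂ ≤ M and A^† (f̃(x_j))_j = (d_i)_i. Then ‖f‖_{L^∞[0,1]} ≤ √n · M · max_i ‖g_i‖_∞ · (‖(f(x_j))_j‖₂ + √N δ) + δ. -/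
/-! Writing `f̃ = ∑ dᵢ gᵢ`, Cauchy–Schwarz gives `|f̃ x| ≤ √n · G · ‖d‖₂`. The coefficients are
recovered from the samples, `d = P (f̃ xⱼ)ⱼ`, so `‖d‖₂ ≤ M ‖(f̃ xⱼ)ⱼ‖₂`, and the samples of `f̃`
differ from those of `f` by at most `δ` in each of the `N` coordinates, i.e. by at most `√N δ`
in `ℓ²`. Finally `|f x| ≤ |f̃ x| + δ`. -/

open Set Finset Matrix

section EuclideanBounds

variable {ι : Type*} [Fintype ι]

theorem sqrt_sum_sq_add_le (a b : ι → ℝ) :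
    √(∑ i, (a i + b i) ^ 2) ≤ √(∑ i, a i ^ 2) + √(∑ i, b i ^ 2) := by
  simpa [EuclideanSpace.norm_eq, sq_abs] using
    norm_add_le (WithLp.toLp 2 a : EuclideanSpace ℝ ι) (WithLp.toLp 2 b)

theorem sqrt_sum_sq_le_sqrt_card_mul {a : ι → ℝ} {δ : ℝ} (hδ : 0 ≤ δ) (h : ∀ i, |a i| ≤ δ) :
    √(∑ i, a i ^ 2) ≤ √(Fintype.card ι) * δ := by
  rw [← Real.sqrt_sq hδ, ← Real.sqrt_mul (Nat.cast_nonneg _)]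
  gcongr
  calc ∑ i, a i ^ 2 = ∑ i, |a i| ^ 2 := by simp only [sq_abs]
    _ ≤ ∑ _i : ι, δ ^ 2 := by gcongr with i; exact h i
    _ = Fintype.card ι * δ ^ 2 := by simp

theorem sqrt_sum_sq_le_of_abs_sub_le {a b : ι → ℝ} {δ : ℝ} (hδ : 0 ≤ δ)
    (h : ∀ i, |a i - b i| ≤ δ) :
    √(∑ i, b i ^ 2) ≤ √(∑ i, a i ^ 2) + √(Fintype.card ι) * δ := by
  have hba : ∀ i, |b i - a i| ≤ δ := fun i => abs_sub_comm (a i) (b i) ▸ h i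
  calc √(∑ i, b i ^ 2) = √(∑ i, (a i + (b i - a i)) ^ 2) := by simp
    _ ≤ √(∑ i, a i ^ 2) + √(∑ i, (b i - a i) ^ 2) := sqrt_sum_sq_add_le _ _
    _ ≤ √(∑ i, a i ^ 2) + √(Fintype.card ι) * δ := by
        gcongr; exact sqrt_sum_sq_le_sqrt_card_mul hδ hba

theorem sum_abs_le_sqrt_card_mul_sqrt_sum_sq (a : ι → ℝ) :
    ∑ i, |a i| ≤ √(Fintype.card ι) * √(∑ i, a i ^ 2) := by
  rw [← Real.sqrt_mul (Nat.cast_nonneg _)]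
  refine Real.le_sqrt_of_sq_le ?_
  simpa using sq_sum_le_card_mul_sum_sq (s := univ) (f := fun i => |a i|)

theorem abs_sum_mul_le_of_sqrt_sum_sq_le {d g : ι → ℝ} {D G : ℝ}
    (hd : √(∑ i, d i ^ 2) ≤ D) (hg : ∀ i, |g i| ≤ G) :
    |∑ i, d i * g i| ≤ √(Fintype.card ι) * D * G := by
  obtain hι | ⟨⟨i₀⟩⟩ := isEmpty_or_nonempty ι
  · simp
  have hG : 0 ≤ G := (abs_nonneg _).trans (hg i₀)
  calc |∑ i, d i * g i| ≤ (∑ i, |d i|) * G := by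
        rw [sum_mul]
        refine (abs_sum_le_sum_abs _ _).trans (sum_le_sum fun i _ => ?_)
        rw [abs_mul]
        exact mul_le_mul_of_nonneg_left (hg i) (abs_nonneg _)
    _ ≤ √(Fintype.card ι) * D * G := by
        gcongr
        exact (sum_abs_le_sqrt_card_mul_sqrt_sum_sq d).trans (by gcongr)

theorem nonneg_of_sqrt_sum_sq_le_mul {κ : Type*} [Fintype κ] [Nonempty ι]
    {T : (ι → ℝ) → κ → ℝ} {M : ℝ}
    (hM : ∀ y, √(∑ k, T y k ^ 2) ≤ M * √(∑ i, y i ^ 2)) : 0 ≤ M := by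
  have hone : 0 < √(∑ _i : ι, (1 : ℝ) ^ 2) := by simp [Fintype.card_pos]
  exact nonneg_of_mul_nonneg_left ((Real.sqrt_nonneg _).trans (hM 1)) hone

end EuclideanBounds

theorem sup_norm_bound_from_collocation_general
    (N n : ℕ) (f : ℝ → ℝ)
    (xs : Fin N → ℝ) (hxs : ∀ j, xs j ∈ Icc (0:ℝ) 1)
    (g : Fin n → ℝ → ℝ)
    (d : Fin n → ℝ) (ftil : ℝ → ℝ)
    (hftil : ∀ x, ftil x = ∑ i : Fin n, d i * g i x)
    (δ : ℝ) (hδ : ∀ x ∈ Icc (0:ℝ) 1, |f x - ftil x| ≤ δ)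
    (P : Matrix (Fin n) (Fin N) ℝ)
    (M : ℝ)
    (hM : ∀ y : Fin N → ℝ,
      Real.sqrt (∑ i : Fin n, (P.mulVec y i) ^ 2) ≤
        M * Real.sqrt (∑ j : Fin N, (y j) ^ 2))
    (hPd : P.mulVec (fun j => ftil (xs j)) = d)
    (G : ℝ) (hG : ∀ i : Fin n, ∀ x ∈ Icc (0:ℝ) 1, |g i x| ≤ G) :
    ∀ x ∈ Icc (0:ℝ) 1,
      |f x| ≤ Real.sqrt n * M * G *
          (Real.sqrt (∑ j : Fin N, (f (xs j)) ^ 2) + Real.sqrt N * δ) + δ := by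
  intro x hx
  have hδ0 : 0 ≤ δ := (abs_nonneg _).trans (hδ 0 ⟨le_rfl, zero_le_one⟩)
  have hsamples : √(∑ j, ftil (xs j) ^ 2) ≤ √(∑ j, f (xs j) ^ 2) + √N * δ := by
    simpa using sqrt_sum_sq_le_of_abs_sub_le hδ0 fun j => hδ (xs j) (hxs j)
  have hcoeff : √(∑ i, d i ^ 2) ≤ M * (√(∑ j, f (xs j) ^ 2) + √N * δ) := by
    subst hPd
    -- `M ≥ 0` follows from `hM` only when there is a sample; without one, `d = P *ᵥ 0 = 0`.
    obtain rfl | hN := Nat.eq_zero_or_pos N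
    · simp
    have : Nonempty (Fin N) := ⟨⟨0, hN⟩⟩
    exact (hM _).trans (mul_le_mul_of_nonneg_left hsamples (nonneg_of_sqrt_sum_sq_le_mul hM))
  calc |f x| ≤ |ftil x| + δ := by linarith [abs_sub_abs_le_abs_sub (f x) (ftil x), hδ x hx]
    _ ≤ √n * (M * (√(∑ j, f (xs j) ^ 2) + √N * δ)) * G + δ := by
        gcongr
        simpa [hftil] using abs_sum_mul_le_of_sqrt_sum_sq_le hcoeff (hG · x hx)
    _ = _ := by ring

/-- an abstract Lebesgue-constant-type bound: the sup-norm of `f` on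
`[0,1]` is controlled by its values at the collocation points plus the best
approximation error `δ` in the span of `g₀,…,g_{n-1}`.  Here `P = A†` is the
Moore–Penrose pseudo-inverse of the interpolation matrix `A`, with spectral norm at
most `M`, recovering the coefficients `d` from the samples of `f̃`, and `G` is
`max_i ‖g_i‖_∞`. -/
theorem sup_norm_bound_from_collocation
    (N n : ℕ) (f : ℝ → ℝ) (hf : ContinuousOn f (Icc (0:ℝ) 1))
    (xs : Fin N → ℝ) (hxs : ∀ j, xs j ∈ Icc (0:ℝ) 1)
    (g : Fin n → ℝ → ℝ) (hg : ∀ i, ContinuousOn (g i) (Icc (0:ℝ) 1))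
    (d : Fin n → ℝ) (ftil : ℝ → ℝ)
    (hftil : ∀ x, ftil x = ∑ i : Fin n, d i * g i x)
    (δ : ℝ) (hδ : ∀ x ∈ Icc (0:ℝ) 1, |f x - ftil x| ≤ δ)
    (A : Matrix (Fin N) (Fin n) ℝ) (hA : ∀ j i, A j i = g i (xs j))
    (P : Matrix (Fin n) (Fin N) ℝ)
    (hp1 : A * P * A = A) (hp2 : P * A * P = P)
    (hp3 : (A * P)ᵀ = A * P) (hp4 : (P * A)ᵀ = P * A)
    (M : ℝ)
    (hM : ∀ y : Fin N → ℝ,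
      Real.sqrt (∑ i : Fin n, (P.mulVec y i) ^ 2) ≤
        M * Real.sqrt (∑ j : Fin N, (y j) ^ 2))
    (hPd : P.mulVec (fun j => ftil (xs j)) = d)
    (G : ℝ) (hG : ∀ i : Fin n, ∀ x ∈ Icc (0:ℝ) 1, |g i x| ≤ G) :
    ∀ x ∈ Icc (0:ℝ) 1,
      |f x| ≤ Real.sqrt n * M * G *
          (Real.sqrt (∑ j : Fin N, (f (xs j)) ^ 2) + Real.sqrt N * δ) + δ :=
  sup_norm_bound_from_collocation_general N n f xs hxs g d ftil hftil δ hδ P M hM hPd G hG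
end
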